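/- Let $L \ge 10$ and set $c = \log_2(L+2)$. In a metric space $(V, \mathbf{d})$ with basepoint $\mathbf{0}$, every finite packed set $A \subseteq V$ with $\mathbf{0} \notin A$ satisfies $\mathrm{diam}(A) \le L \cdot |A|^{c}$. -/

import Mathlib

noncomputable def setDist {V : Type*} [MetricSpace V] (D E : Set V) : ℝ :=
  sInf (Set.image2 dist D E)

/-- `D` witnesses that `A` is sparse: it is a nonempty proper subset of `A`
avoiding the basepoint `o`, whose distance to its complement in `A` exceeds
`L * max (diam D) 1`. -/
def SparseWitness {V : Type*} [MetricSpace V] (o : V) (L : ℝ) (A D : Set V) : Prop :=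
  D.Nonempty ∧ D ⊆ A ∧ D ≠ A ∧ o ∉ D ∧
    setDist D (A \ D) > L * max (Metric.diam D) 1

/-- `A` is packed if it admits no sparse witness. -/
def IsPacked {V : Type*} [MetricSpace V] (o : V) (L : ℝ) (A : Set V) : Prop :=
  ∀ D : Set V, ¬ SparseWitness o L A D

open Set Metric

private lemma sd_le {V : Type*} [MetricSpace V] {D E : Set V} {x y : V}
    (hx : x ∈ D) (hy : y ∈ E) : setDist D E ≤ dist x y := by
  apply csInf_le
  · exact ⟨0, by rintro r ⟨a, ha, b, hb, rfl⟩; exact dist_nonneg⟩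
  · exact Set.mem_image2_of_mem hx hy

private lemma sd_exists {V : Type*} [MetricSpace V] {D E : Set V} (hD : D.Nonempty)
    (hE : E.Nonempty) (hDf : D.Finite) (hEf : E.Finite) :
    ∃ x ∈ D, ∃ y ∈ E, dist x y = setDist D E := by
  have hfin : (Set.image2 dist D E).Finite := Set.Finite.image2 _ hDf hEf
  have hne : (Set.image2 dist D E).Nonempty := hD.image2 hE
  obtain ⟨x, hx, y, hy, h⟩ := hne.csInf_mem hfin
  exact ⟨x, hx, y, hy, h⟩

private lemma sd_comm {V : Type*} [MetricSpace V] (D E : Set V) : setDist D E = setDist E D := by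
  unfold setDist
  rw [Set.image2_swap]
  simp only [dist_comm]

private lemma sd_nonneg {V : Type*} [MetricSpace V] (D E : Set V) : 0 ≤ setDist D E := by
  apply Real.sInf_nonneg
  rintro r ⟨a, ha, b, hb, rfl⟩; exact dist_nonneg

private lemma calc_lemma {L c : ℝ} (hL : 10 ≤ L) (hc1 : 1 ≤ c) (h2c : (2:ℝ) ^ c = L + 2)
    {k s : ℝ} (hs0 : 0 ≤ s) (hsk : 2 * s ≤ k) :
    (k - s) ^ c + (L + 1) * s ^ c ≤ k ^ c := by
  have hc0 : (0:ℝ) < c := lt_of_lt_of_le one_pos hc1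
  have hk0 : 0 ≤ k := by linarith
  have h1 : ConvexOn ℝ (Set.Ici (0:ℝ)) (fun x : ℝ => x ^ c) := convexOn_rpow hc1
  let aff : ℝ →ᵃ[ℝ] ℝ := AffineMap.mk' (fun x => k - x) (-LinearMap.id) 0
    (by intro p; simp; ring)
  have h2 : ConvexOn ℝ (aff ⁻¹' (Set.Ici 0)) ((fun x : ℝ => x ^ c) ∘ aff) :=
    h1.comp_affineMap aff
  have hpre : Set.Icc (0:ℝ) k ⊆ aff ⁻¹' (Set.Ici 0) := by
    intro x hx
    simp only [Set.mem_preimage, Set.mem_Ici, aff, AffineMap.coe_mk']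
    linarith [hx.2]
  have hIcc : Set.Icc (0:ℝ) k ⊆ Set.Ici 0 := fun x hx => hx.1
  have hf1 : ConvexOn ℝ (Set.Icc (0:ℝ) k) (fun x : ℝ => (k - x) ^ c) :=
    h2.subset hpre (convex_Icc _ _)
  have hf2 : ConvexOn ℝ (Set.Icc (0:ℝ) k) (fun x : ℝ => (L + 1) * x ^ c) :=
    (h1.smul (by linarith : (0:ℝ) ≤ L + 1)).subset hIcc (convex_Icc _ _)
  have hf : ConvexOn ℝ (Set.Icc (0:ℝ) k) (fun x : ℝ => (k - x) ^ c + (L + 1) * x ^ c) :=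
    hf1.add hf2
  have hmem0 : (0:ℝ) ∈ Set.Icc (0:ℝ) k := ⟨le_refl _, hk0⟩
  have hmemk2 : k / 2 ∈ Set.Icc (0:ℝ) k := ⟨by linarith, by linarith⟩
  have hseg : s ∈ segment ℝ (0:ℝ) (k / 2) := by
    rw [segment_eq_Icc (by linarith : (0:ℝ) ≤ k / 2)]
    exact ⟨hs0, by linarith⟩
  have hmax := hf.le_on_segment hmem0 hmemk2 hseg
  have hv0 : (k - 0) ^ c + (L + 1) * (0:ℝ) ^ c = k ^ c := by
    simp [Real.zero_rpow (ne_of_gt hc0)]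
  have hvk : (k - k / 2) ^ c + (L + 1) * (k / 2) ^ c = k ^ c := by
    have h3 : k - k / 2 = k / 2 := by ring
    rw [h3]
    have h4 : (k / 2) ^ c = k ^ c / (L + 2) := by
      rw [Real.div_rpow hk0 (by norm_num : (0:ℝ) ≤ 2), h2c]
    rw [h4]
    field_simp
    ring
  rw [hv0, hvk, max_self] at hmax
  exact hmax

private lemma combine {L c : ℝ} (hL : 10 ≤ L) (hc1 : 1 ≤ c) (h2c : (2:ℝ) ^ c = L + 2)
    {t₁ t₂ n : ℕ} (htn : t₁ + t₂ = n)
    {dU dW g : ℝ} (hdU : dU ≤ L * (t₁:ℝ) ^ c) (hdW : dW ≤ L * (t₂:ℝ) ^ c)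
    (hgU : g ≤ L ^ 2 * (t₁:ℝ) ^ c) (hgW : g ≤ L ^ 2 * (t₂:ℝ) ^ c) :
    dU + g + dW ≤ L * (n:ℝ) ^ c := by
  have hL0 : (0:ℝ) ≤ L := by linarith
  rcases le_total t₁ t₂ with h | h
  · have hcast : (t₂:ℝ) = (n:ℝ) - (t₁:ℝ) := by
      have : (t₁:ℝ) + (t₂:ℝ) = (n:ℝ) := by exact_mod_cast congrArg (Nat.cast (R := ℝ)) htn
      linarith
    have hcalc := calc_lemma hL hc1 h2c (k := (n:ℝ)) (s := (t₁:ℝ))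
      (by positivity)
      (by
        have h' : (t₁:ℝ) ≤ (t₂:ℝ) := by exact_mod_cast h
        linarith [hcast])
    rw [← hcast] at hcalc
    have := mul_le_mul_of_nonneg_left hcalc hL0
    nlinarith [this]
  · have hcast : (t₁:ℝ) = (n:ℝ) - (t₂:ℝ) := by
      have : (t₁:ℝ) + (t₂:ℝ) = (n:ℝ) := by exact_mod_cast congrArg (Nat.cast (R := ℝ)) htn
      linarith
    have hcalc := calc_lemma hL hc1 h2c (k := (n:ℝ)) (s := (t₂:ℝ))
      (by positivity)
      (by
        have h' : (t₂:ℝ) ≤ (t₁:ℝ) := by exact_mod_cast h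
        linarith [hcast])
    rw [← hcast] at hcalc
    have := mul_le_mul_of_nonneg_left hcalc hL0
    nlinarith [this]

private lemma packed_aux {V : Type*} [MetricSpace V] (o : V) {L c : ℝ} (hL : 10 ≤ L)
    (hc1 : 1 ≤ c) (h2c : (2:ℝ) ^ c = L + 2) :
    ∀ n : ℕ, ∀ A : Set V, A.Finite → A.ncard = n → IsPacked o L A → o ∉ A →
      Metric.diam A ≤ L * (n:ℝ) ^ c := by
  intro n
  induction n using Nat.strong_induction_on with
  | _ n IH =>
  intro A hAfin hcard hpA ho
  have hc0 : (0:ℝ) < c := lt_of_lt_of_le one_pos hc1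
  by_cases hn2 : n < 2
  · have hsub : A.Subsingleton := by
      intro x hx y hy
      by_contra hxy
      have h1 : 1 < A.ncard := (Set.one_lt_ncard hAfin).2 ⟨x, hx, y, hy, hxy⟩
      omega
    rw [Metric.diam_subsingleton hsub]
    have : (0:ℝ) ≤ (n:ℝ) ^ c := Real.rpow_nonneg (by positivity) c
    nlinarith
  · push_neg at hn2
    obtain ⟨a, ha, b, hb, hab⟩ := (Set.one_lt_ncard hAfin).1 (by omega)
    have hsubfin : {E : Set V | E ⊆ A}.Finite := hAfin.finite_subsets
    have hSfin : {E : Set V | E ⊆ A ∧ E.Nonempty ∧ E ≠ A}.Finite :=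
      hsubfin.subset fun E hE => hE.1
    have hSne : {E : Set V | E ⊆ A ∧ E.Nonempty ∧ E ≠ A}.Nonempty := by
      refine ⟨{a}, by simpa using ha, ⟨a, rfl⟩, ?_⟩
      intro h
      rw [← h] at hb
      exact hab (Set.mem_singleton_iff.1 hb).symm
    obtain ⟨B₀, hB₀S, hB₀max⟩ := Set.Finite.exists_maximalFor
      (fun E => setDist E (A \ E)) _ hSfin hSne
    set g := setDist B₀ (A \ B₀) with hgdef
    have hg0 : 0 ≤ g := sd_nonneg _ _
    have hgmax : ∀ E : Set V, E ⊆ A → E.Nonempty → E ≠ A → setDist E (A \ E) ≤ g := by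
      intro E h1 h2 h3
      rcases le_total (setDist E (A \ E)) g with h | h
      · exact h
      · exact hB₀max ⟨h1, h2, h3⟩ h
    have sdach : ∀ D E : Set V, D ⊆ A → E ⊆ A → D.Nonempty → E.Nonempty →
        ∃ x ∈ D, ∃ y ∈ E, dist x y = setDist D E := fun D E hD hE h1 h2 =>
      sd_exists h1 h2 (hAfin.subset hD) (hAfin.subset hE)
    -- the collection of maximal-gap pieces that are glued
    set Gcol := {U : Set V | ((U ⊆ A ∧ U.Nonempty ∧ U ≠ A) ∧ setDist U (A \ U) = g) ∧
        ∀ E : Set V, E ⊆ U → E.Nonempty → E ≠ U → setDist E (U \ E) ≤ g} with hGcol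
    have hGfin : Gcol.Finite := hSfin.subset fun U hU => hU.1.1
    -- a minimal-cardinality gap achiever is glued
    have hGne : Gcol.Nonempty := by
      have hAcfin : {U : Set V | (U ⊆ A ∧ U.Nonempty ∧ U ≠ A) ∧
          setDist U (A \ U) = g}.Finite := hSfin.subset fun U hU => hU.1
      have hAcne : {U : Set V | (U ⊆ A ∧ U.Nonempty ∧ U ≠ A) ∧
          setDist U (A \ U) = g}.Nonempty := ⟨B₀, hB₀S, rfl⟩
      obtain ⟨U₀, hU₀mem, hU₀min⟩ := Set.Finite.exists_minimalFor Set.ncard _ hAcfin hAcne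
      obtain ⟨⟨hU₀A, hU₀ne, hU₀neqA⟩, hU₀g⟩ := hU₀mem
      refine ⟨U₀, ⟨⟨hU₀A, hU₀ne, hU₀neqA⟩, hU₀g⟩, ?_⟩
      intro E hEU hEne hEneq
      by_contra hgt'
      push_neg at hgt'
      have hEA : E ⊆ A := hEU.trans hU₀A
      have hWU₀ne : (A \ U₀).Nonempty := by
        obtain ⟨w, hw1, hw2⟩ := Set.exists_of_ssubset (hU₀A.ssubset_of_ne hU₀neqA)
        exact ⟨w, hw1, hw2⟩
      have hEneqA : E ≠ A := by
        intro h
        rw [h] at hEU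
        exact hU₀neqA (Set.Subset.antisymm hU₀A hEU)
      have hsplit : setDist E (A \ E) = g := by
        refine le_antisymm (hgmax E hEA hEne hEneqA) ?_
        obtain ⟨x, hx, y, hy, hxy⟩ := sdach E (A \ E) hEA Set.diff_subset hEne
          (hWU₀ne.mono (Set.diff_subset_diff_right hEU))
        rw [← hxy]
        by_cases hyU : y ∈ U₀
        · calc g ≤ setDist E (U₀ \ E) := le_of_lt hgt'
            _ ≤ dist x y := sd_le hx ⟨hyU, hy.2⟩
        · calc g = setDist U₀ (A \ U₀) := hU₀g.symm
            _ ≤ dist x y := sd_le (hEU hx) ⟨hy.1, hyU⟩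
      have hEmem : E ∈ {U : Set V | (U ⊆ A ∧ U.Nonempty ∧ U ≠ A) ∧
          setDist U (A \ U) = g} := ⟨⟨hEA, hEne, hEneqA⟩, hsplit⟩
      have hlt : E.ncard < U₀.ncard :=
        Set.ncard_lt_ncard (hEU.ssubset_of_ne hEneq) (hAfin.subset hU₀A)
      have := hU₀min hEmem (le_of_lt hlt)
      omega
    -- maximal-cardinality glued achiever
    obtain ⟨U, hUmem, hUmax0⟩ := Set.Finite.exists_maximalFor Set.ncard _ hGfin hGne
    have hUmax : ∀ U' ∈ Gcol, U'.ncard ≤ U.ncard := by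
      intro U' hU'
      rcases le_total U'.ncard U.ncard with h | h
      · exact h
      · exact hUmax0 hU' h
    obtain ⟨⟨⟨hUA, hUne, hUneqA⟩, hUg⟩, hUglued⟩ := hUmem
    set W := A \ U with hW
    have hWA : W ⊆ A := Set.diff_subset
    have hWne : W.Nonempty := by
      obtain ⟨w, hw1, hw2⟩ := Set.exists_of_ssubset (hUA.ssubset_of_ne hUneqA)
      exact ⟨w, hw1, hw2⟩
    have hWfin := hAfin.subset hWA
    have hUfin := hAfin.subset hUA
    have hWg : setDist W (A \ W) = g := by
      rw [hW, Set.diff_diff_cancel_left hUA, sd_comm]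
      exact hUg
    -- the complement is glued as well
    have hWglued : ∀ E : Set V, E ⊆ W → E.Nonempty → E ≠ W → setDist E (W \ E) ≤ g := by
      intro E hEW hEne hEneq
      by_contra hgt'
      push_neg at hgt'
      have hEA : E ⊆ A := hEW.trans hWA
      have hFne : (W \ E).Nonempty := by
        obtain ⟨w, hw1, hw2⟩ := Set.exists_of_ssubset (hEW.ssubset_of_ne hEneq)
        exact ⟨w, hw1, hw2⟩
      have hU'A : U ∪ E ⊆ A := Set.union_subset hUA hEA
      have hU'ne : (U ∪ E).Nonempty := hUne.mono Set.subset_union_left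
      have hAU' : A \ (U ∪ E) = W \ E := by
        rw [← Set.diff_diff, ← hW]
      have hU'neqA : U ∪ E ≠ A := by
        obtain ⟨f, hf⟩ := hFne
        intro h
        have hfA : f ∈ A := hWA hf.1
        rw [← h] at hfA
        rcases hfA with hfU | hfE
        · exact hf.1.2 hfU
        · exact hf.2 hfE
      have hU'g : setDist (U ∪ E) (A \ (U ∪ E)) = g := by
        refine le_antisymm (hgmax _ hU'A hU'ne hU'neqA) ?_
        obtain ⟨x, hx, y, hy, hxy⟩ := sdach (U ∪ E) (A \ (U ∪ E)) hU'A Set.diff_subset hU'ne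
          (by rw [hAU']; exact hFne)
        rw [← hxy]
        rw [hAU'] at hy
        rcases hx with hxU | hxE
        · calc g = setDist U (A \ U) := hUg.symm
            _ ≤ dist x y := sd_le hxU hy.1
        · have h1 : setDist E (W \ E) ≤ dist x y := sd_le hxE hy
          linarith
      have hU'glued : ∀ P : Set V, P ⊆ U ∪ E → P.Nonempty → P ≠ U ∪ E →
          setDist P ((U ∪ E) \ P) ≤ g := by
        intro P hPU' hPne hPneq
        by_contra hP
        push_neg at hP
        by_cases hUP1 : (U ∩ P).Nonempty
        · by_cases hUP2 : (U \ P).Nonempty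
          · have hneq : U ∩ P ≠ U := by
              intro hh
              obtain ⟨z, hz1, hz2⟩ := hUP2
              have hz3 : z ∈ U ∩ P := by rw [hh]; exact hz1
              exact hz2 hz3.2
            have hle := hUglued (U ∩ P) Set.inter_subset_left hUP1 hneq
            rw [Set.diff_self_inter] at hle
            obtain ⟨x, hx, y, hy, hxy⟩ := sdach (U ∩ P) (U \ P)
              (Set.inter_subset_left.trans hUA) (Set.diff_subset.trans hUA) hUP1 hUP2
            have h2 : setDist P ((U ∪ E) \ P) ≤ dist x y :=
              sd_le hx.2 ⟨Or.inl hy.1, hy.2⟩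
            rw [hxy] at h2
            linarith
          · have hUP : U ⊆ P := by
              intro z hz
              by_contra hzP
              exact hUP2 ⟨z, hz, hzP⟩
            have hQne : ((U ∪ E) \ P).Nonempty := by
              obtain ⟨w, hw1, hw2⟩ := Set.exists_of_ssubset (hPU'.ssubset_of_ne hPneq)
              exact ⟨w, hw1, hw2⟩
            have hQE : (U ∪ E) \ P ⊆ E := by
              rintro z ⟨hz1, hz2⟩
              rcases hz1 with h | h
              · exact absurd (hUP h) hz2
              · exact h
            have hQA : (U ∪ E) \ P ⊆ A := Set.diff_subset.trans hU'A
            have hQneqA : (U ∪ E) \ P ≠ A := by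
              intro hh
              obtain ⟨u, hu⟩ := hUne
              have h' : u ∈ (U ∪ E) \ P := by rw [hh]; exact hUA hu
              exact h'.2 (hUP hu)
            have hle := hgmax _ hQA hQne hQneqA
            obtain ⟨x, hx, y, hy, hxy⟩ := sdach ((U ∪ E) \ P) (A \ ((U ∪ E) \ P))
              hQA Set.diff_subset hQne
              (by
                obtain ⟨u, hu⟩ := hUne
                exact ⟨u, hUA hu, fun hc => hc.2 (hUP hu)⟩)
            have hlt2 : g < dist x y := by
              by_cases hyP : y ∈ P
              · have h3 := sd_le hyP hx
                rw [dist_comm] at h3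
                linarith
              · have hyU' : y ∉ U ∪ E := by
                  intro hyU'
                  exact hy.2 ⟨hyU', hyP⟩
                have hyF : y ∈ W \ E := by
                  rw [← hAU']
                  exact ⟨hy.1, hyU'⟩
                have h3 := sd_le (hQE hx) hyF
                linarith
            rw [hxy] at hlt2
            linarith
        · have hPE : P ⊆ E := by
            intro z hz
            rcases hPU' hz with h | h
            · exact absurd ⟨z, h, hz⟩ hUP1
            · exact h
          have hPA : P ⊆ A := hPE.trans hEA
          have hPneqA : P ≠ A := by
            intro hh
            obtain ⟨u, hu⟩ := hUne
            have huP : u ∈ P := by rw [hh]; exact hUA hu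
            exact hUP1 ⟨u, hu, huP⟩
          have hle := hgmax _ hPA hPne hPneqA
          obtain ⟨x, hx, y, hy, hxy⟩ := sdach P (A \ P) hPA Set.diff_subset hPne
            (by
              obtain ⟨u, hu⟩ := hUne
              exact ⟨u, hUA hu, fun hc => hUP1 ⟨u, hu, hc⟩⟩)
          have hlt2 : g < dist x y := by
            by_cases hyU' : y ∈ U ∪ E
            · have h3 := sd_le hx (show y ∈ (U ∪ E) \ P from ⟨hyU', hy.2⟩)
              linarith
            · have hyF : y ∈ W \ E := by
                rw [← hAU']
                exact ⟨hy.1, hyU'⟩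
              have h3 := sd_le (hPE hx) hyF
              linarith
          rw [hxy] at hlt2
          linarith
      have hU'mem : U ∪ E ∈ Gcol := ⟨⟨⟨hU'A, hU'ne, hU'neqA⟩, hU'g⟩, hU'glued⟩
      have hss : U ⊂ U ∪ E := by
        refine ⟨Set.subset_union_left, ?_⟩
        intro hsub
        obtain ⟨e, he⟩ := hEne
        have : e ∈ U := hsub (Or.inr he)
        exact (hEW he).2 this
      have hlt := Set.ncard_lt_ncard hss (hAfin.subset hU'A)
      have := hUmax _ hU'mem
      omega
    have hWneqA : W ≠ A := by
      intro hh
      obtain ⟨u, hu⟩ := hUne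
      have h' : u ∈ W := by rw [hh]; exact hUA hu
      exact h'.2 hu
    -- glued maximal-gap pieces are packed
    have packedfun : ∀ B : Set V, B ⊆ A → B.Nonempty → B ≠ A →
        setDist B (A \ B) = g →
        (∀ E : Set V, E ⊆ B → E.Nonempty → E ≠ B → setDist E (B \ E) ≤ g) →
        IsPacked o L B := by
      intro B hBA hBne hBneqA hBg hBglued D hD
      obtain ⟨hDne, hDB, hDneqB, hoD, hgtD⟩ := hD
      by_cases hMg : L * max (Metric.diam D) 1 < g
      · refine hpA D ⟨hDne, hDB.trans hBA, ?_, hoD, ?_⟩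
        · intro hh
          rw [hh] at hDB
          exact hBneqA (Set.Subset.antisymm hBA hDB)
        · obtain ⟨x, hx, y, hy, hxy⟩ := sdach D (A \ D) (hDB.trans hBA) Set.diff_subset hDne
            (by
              obtain ⟨w, hwA, hwB⟩ := Set.exists_of_ssubset (hBA.ssubset_of_ne hBneqA)
              exact ⟨w, hwA, fun hc => hwB (hDB hc)⟩)
          rw [← hxy]
          by_cases hyB : y ∈ B
          · have h3 := sd_le hx (show y ∈ B \ D from ⟨hyB, hy.2⟩)
            linarith
          · have h3 := sd_le (hDB hx) (show y ∈ A \ B from ⟨hy.1, hyB⟩)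
            rw [hBg] at h3
            linarith
      · push_neg at hMg
        have h3 := hBglued D hDB hDne hDneqB
        linarith
    have packedU : IsPacked o L U := packedfun U hUA hUne hUneqA hUg hUglued
    have packedW : IsPacked o L W := packedfun W hWA hWne hWneqA hWg hWglued
    -- final assembly
    have hUW : U ∪ W = A := Set.union_diff_cancel hUA
    have ht1pos : 0 < U.ncard := (Set.ncard_pos hUfin).2 hUne
    have ht2pos : 0 < W.ncard := (Set.ncard_pos hWfin).2 hWne
    have htn : U.ncard + W.ncard = n := by
      rw [← hcard, ← hUW]
      exact (Set.ncard_union_eq Set.disjoint_sdiff_right hUfin hWfin).symm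
    have ht1lt : U.ncard < n := by
      rw [← hcard]
      exact Set.ncard_lt_ncard (hUA.ssubset_of_ne hUneqA) hAfin
    have ht2lt : W.ncard < n := by
      rw [← hcard]
      exact Set.ncard_lt_ncard (hWA.ssubset_of_ne hWneqA) hAfin
    have hoU : o ∉ U := fun h => ho (hUA h)
    have hoW : o ∉ W := fun h => ho (hWA h)
    have hdU := IH U.ncard ht1lt U hUfin rfl packedU hoU
    have hdW := IH W.ncard ht2lt W hWfin rfl packedW hoW
    have hrpow1U : (1:ℝ) ≤ (U.ncard:ℝ) ^ c := by
      have h' : (1:ℝ) ≤ (U.ncard:ℝ) := by exact_mod_cast ht1pos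
      calc (1:ℝ) = 1 ^ c := (Real.one_rpow c).symm
        _ ≤ (U.ncard:ℝ) ^ c := Real.rpow_le_rpow (by norm_num) h' (le_of_lt hc0)
    have hrpow1W : (1:ℝ) ≤ (W.ncard:ℝ) ^ c := by
      have h' : (1:ℝ) ≤ (W.ncard:ℝ) := by exact_mod_cast ht2pos
      calc (1:ℝ) = 1 ^ c := (Real.one_rpow c).symm
        _ ≤ (W.ncard:ℝ) ^ c := Real.rpow_le_rpow (by norm_num) h' (le_of_lt hc0)
    have hgmaxU : g ≤ L * max (Metric.diam U) 1 := by
      by_contra hh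
      push_neg at hh
      exact hpA U ⟨hUne, hUA, hUneqA, hoU, by rw [← hW, hUg]; exact hh⟩
    have hgmaxW : g ≤ L * max (Metric.diam W) 1 := by
      by_contra hh
      push_neg at hh
      exact hpA W ⟨hWne, hWA, hWneqA, hoW, by rw [hWg]; exact hh⟩
    have hgU : g ≤ L ^ 2 * (U.ncard:ℝ) ^ c := by
      have hmaxle : max (Metric.diam U) 1 ≤ L * (U.ncard:ℝ) ^ c :=
        max_le hdU (by nlinarith)
      calc g ≤ L * max (Metric.diam U) 1 := hgmaxU
        _ ≤ L * (L * (U.ncard:ℝ) ^ c) :=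
            mul_le_mul_of_nonneg_left hmaxle (by linarith)
        _ = L ^ 2 * (U.ncard:ℝ) ^ c := by ring
    have hgW : g ≤ L ^ 2 * (W.ncard:ℝ) ^ c := by
      have hmaxle : max (Metric.diam W) 1 ≤ L * (W.ncard:ℝ) ^ c :=
        max_le hdW (by nlinarith)
      calc g ≤ L * max (Metric.diam W) 1 := hgmaxW
        _ ≤ L * (L * (W.ncard:ℝ) ^ c) :=
            mul_le_mul_of_nonneg_left hmaxle (by linarith)
        _ = L ^ 2 * (W.ncard:ℝ) ^ c := by ring
    obtain ⟨x, hx, y, hy, hxy⟩ := sdach U W hUA hWA hUne hWne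
    have hdA : Metric.diam A ≤ Metric.diam U + dist x y + Metric.diam W := by
      conv_lhs => rw [← hUW]
      exact Metric.diam_union hx hy
    have hdistg : dist x y = g := by
      rw [hxy, ← hUg, hW]
    rw [hdistg] at hdA
    have hfinal := combine hL hc1 h2c htn hdU hdW hgU hgW
    linarith

theorem stmt9 {V : Type*} [MetricSpace V] (o : V) (L : ℝ) (hL : 10 ≤ L)
    (c : ℝ) (hc : c = Real.logb 2 (L + 2))
    (A : Set V) (hA : A.Finite) (hpA : IsPacked o L A) (ho : o ∉ A) :
    Metric.diam A ≤ L * (A.ncard : ℝ) ^ c := by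
  have hc1 : 1 ≤ c := by
    rw [hc]
    rw [Real.le_logb_iff_rpow_le (by norm_num) (by linarith)]
    rw [Real.rpow_one]
    linarith
  have h2c : (2:ℝ) ^ c = L + 2 := by
    rw [hc]
    exact Real.rpow_logb (by norm_num) (by norm_num) (by linarith)
  exact packed_aux o hL hc1 h2c A.ncard A hA rfl hpA ho
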